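/- arXiv:2406.12777 — 4 statements merged into one kernel-verified Lean document; each statement's English description precedes it below -/
import Mathlib

section
/- Let G be a finitely generated group, let ρ : G → H be a group epimorphism, and let X ⊆ A^H be a subshift. Let ρ*(X) = {x ∘ ρ : x ∈ X} ⊆ A^G be the pullback subshift. Then m(X) = m(ρ*(X)). -/
namespace MedvedevFormal

/-! ### Medvedev reducibility on Baire space -/

/-- The finite prefix of length `k` of a point of Baire space, as a list. -/
def pref (x : ℕ → ℕ) (k : ℕ) : List ℕ := (List.range k).map x

/-- Medvedev reducibility `m(P) ≤ m(Q)` between subsets of Baire space: some computable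
monotone prefix-functional (i.e. a partial computable type-two functional), defined on all
of `Q`, maps every element of `Q` to an element of `P`. -/
def BaireLE (P Q : Set (ℕ → ℕ)) : Prop :=
  ∃ φ : List ℕ → List ℕ, Computable φ ∧
    (∀ l₁ l₂ : List ℕ, l₁ <+: l₂ → φ l₁ <+: φ l₂) ∧
    ∀ x ∈ Q, ∃ y ∈ P, ∀ n : ℕ, ∃ k : ℕ, (φ (pref x k))[n]? = some (y n)

/-- Medvedev equivalence: `m(P) = m(Q)`. -/
def BaireEquiv (P Q : Set (ℕ → ℕ)) : Prop := BaireLE P Q ∧ BaireLE Q P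

/-- A canonical representative of the join `m(P) ∨ m(Q)`. -/
def joinSet (P Q : Set (ℕ → ℕ)) : Set (ℕ → ℕ) :=
  {x | (fun n => x (2 * n)) ∈ P ∧ (fun n => x (2 * n + 1)) ∈ Q}

/-- A canonical representative of the meet `m(P) ∧ m(Q)`. -/
def meetSet (P Q : Set (ℕ → ℕ)) : Set (ℕ → ℕ) :=
  {x | (x 0 = 0 ∧ (fun n => x (n + 1)) ∈ P) ∨ (x 0 = 1 ∧ (fun n => x (n + 1)) ∈ Q)}

/-- `P` has the zero Medvedev degree `0_M`: it contains a computable point. -/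
def IsZeroDeg (P : Set (ℕ → ℕ)) : Prop := ∃ y ∈ P, Computable y

/-- The cylinder of a finite word in Baire space. -/
def cylinder (l : List ℕ) : Set (ℕ → ℕ) :=
  {x | ∀ (i : ℕ) (h : i < l.length), x i = l[i]}

/-- Cantor space `{0,1}^ℕ` inside Baire space. -/
def cantorSpace : Set (ℕ → ℕ) := {x | ∀ n, x n ≤ 1}

/-- `P` is an effectively closed (`Π⁰₁`) subset of Cantor space: its complement within
Cantor space is the union of the cylinders of a computably enumerable sequence of words. -/
def IsPi01Cantor (P : Set (ℕ → ℕ)) : Prop :=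
  ∃ f : ℕ → List ℕ, Computable f ∧ P = cantorSpace \ ⋃ n, cylinder (f n)

/-- The Medvedev degree of `P` is a `Π⁰₁` Medvedev degree. -/
def IsPi01Deg (P : Set (ℕ → ℕ)) : Prop :=
  ∃ Q, IsPi01Cantor Q ∧ Q.Nonempty ∧ BaireEquiv P Q

/-- `P` realizes the maximal `Π⁰₁` Medvedev degree (the degree of the class of complete
consistent extensions of Peano arithmetic): it is a nonempty `Π⁰₁` subset of Cantor space
to which every nonempty `Π⁰₁` subset of Cantor space is Medvedev reducible. -/
def IsMaxPi01 (P : Set (ℕ → ℕ)) : Prop :=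
  IsPi01Cantor P ∧ P.Nonempty ∧ ∀ Q, IsPi01Cantor Q → Q.Nonempty → BaireLE Q P

/-! ### Encoding of configuration spaces -/

/-- The canonical encoding of a configuration `x : α → A` as a point of Baire space. -/
def confFun {α A : Type*} [Encodable α] [Encodable A] (x : α → A) : ℕ → ℕ :=
  fun n => Encodable.encode ((Encodable.decode (α := α) n).map x)

/-- The image of a set of configurations in Baire space, used to measure its
Medvedev degree. -/
def mSet {α A : Type*} [Encodable α] [Encodable A] (X : Set (α → A)) : Set (ℕ → ℕ) :=
  confFun '' X

/-- A configuration is computable if its Baire-space encoding is computable. -/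
def ComputablePoint {α A : Type*} [Encodable α] [Encodable A] (x : α → A) : Prop :=
  Computable (confFun x)

/-- `m(X) ≤ m(Y)` for sets of configurations. -/
def MedLE {α A β B : Type*} [Encodable α] [Encodable A] [Encodable β] [Encodable B]
    (X : Set (α → A)) (Y : Set (β → B)) : Prop :=
  BaireLE (mSet X) (mSet Y)

/-- `m(X) = m(Y)` for sets of configurations. -/
def MedEquiv {α A β B : Type*} [Encodable α] [Encodable A] [Encodable β] [Encodable B]
    (X : Set (α → A)) (Y : Set (β → B)) : Prop :=
  MedLE X Y ∧ MedLE Y X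

/-! ### Subshifts -/

/-- The left shift action: `(g • x) h = x (g⁻¹ h)`. -/
def shift {G A : Type*} [Group G] (g : G) (x : G → A) : G → A := fun h => x (g⁻¹ * h)

/-- The prodiscrete topology on `A^G`. -/
def prodiscrete (G A : Type*) : TopologicalSpace (G → A) :=
  @Pi.topologicalSpace G (fun _ => A) fun _ => ⊥

/-- A subshift: a shift-invariant subset of `A^G`, closed in the prodiscrete topology. -/
def IsSubshift {G A : Type*} [Group G] (X : Set (G → A)) : Prop :=
  (∀ x ∈ X, ∀ g : G, shift g x ∈ X) ∧ @IsClosed (G → A) (prodiscrete G A) X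

/-- A pattern: a map `p : D → A` with `D ⊆ G` finite. -/
structure Pattern (G A : Type*) where
  dom : Finset G
  val : {g // g ∈ dom} → A

/-- The translate `g • x` agrees with the pattern `p` on its domain. -/
def MatchesAt {G A : Type*} [Group G] (p : Pattern G A) (g : G) (x : G → A) : Prop :=
  ∀ h : {g' // g' ∈ p.dom}, shift g x h = p.val h

/-- A subshift of finite type: defined by a finite list of forbidden patterns. -/
def IsSFT {G A : Type*} [Group G] (X : Set (G → A)) : Prop :=
  ∃ F : List (Pattern G A), X = {x | ∀ p ∈ F, ∀ g : G, ¬MatchesAt p g x}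

/-- A morphism between subshifts: a continuous shift-equivariant map from `X` to `Y`. -/
def IsMorphism {G A B : Type*} [Group G] (X : Set (G → A)) (Y : Set (G → B))
    (φ : (G → A) → (G → B)) : Prop :=
  Set.MapsTo φ X Y ∧
    @ContinuousOn (G → A) (G → B) (prodiscrete G A) (prodiscrete G B) φ X ∧
    ∀ x ∈ X, ∀ g : G, φ (shift g x) = shift g (φ x)

/-- A sofic subshift: the image of an SFT (on some finite alphabet) under a topological
factor map. -/
def IsSofic {G A : Type*} [Group G] (X : Set (G → A)) : Prop :=
  ∃ (B : Type) (_ : Finite B) (Y : Set (G → B)) (φ : (G → B) → (G → A)),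
    IsSFT Y ∧ IsMorphism Y X φ ∧ φ '' Y = X

/-! ### Finitely generated groups, covers and pullbacks -/

/-- `σ` enumerates a finite symmetric generating set of `G`. -/
def IsSymmGen {G : Type*} [Group G] {k : ℕ} (σ : Fin k → G) : Prop :=
  Subgroup.closure (Set.range σ) = ⊤ ∧ ∀ i, (σ i)⁻¹ ∈ Set.range σ

/-- The canonical encoding of a free group via reduced words. -/
instance freeGroupEncodable {α : Type*} [DecidableEq α] [Encodable α] :
    Encodable (FreeGroup α) :=
  Encodable.ofLeftInjection FreeGroup.toWord (fun l => some (FreeGroup.mk l))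
    fun _ => congrArg some FreeGroup.mk_toWord

/-- The canonical homomorphism from the free group determined by `σ`. -/
def cover {G : Type*} [Group G] {k : ℕ} (σ : Fin k → G) : FreeGroup (Fin k) →* G :=
  FreeGroup.lift σ

/-- The pullback of a subshift along a group homomorphism. -/
def pullback {K G A : Type*} [Group K] [Group G] (ρ : K →* G) (X : Set (G → A)) :
    Set (K → A) :=
  (fun x => x ∘ ρ) '' X

/-- The group element represented by a word over the generators. -/
def wordVal {G : Type*} [Group G] {k : ℕ} (σ : Fin k → G) (w : List (Fin k × Bool)) : G :=
  cover σ (FreeGroup.mk w)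

/-- `G` is recursively presented w.r.t. `σ`: its word problem is recursively enumerable. -/
def RecursivelyPresented {G : Type*} [Group G] {k : ℕ} (σ : Fin k → G) : Prop :=
  ∃ f : ℕ → Option (List (Fin k × Bool)), Computable f ∧
    ∀ w : List (Fin k × Bool), (wordVal σ w = 1 ↔ ∃ n, f n = some w)

/-- The membership problem of the subgroup `H` in `G` is decidable w.r.t. `σ`. -/
def DecidableMembership {G : Type*} [Group G] {k : ℕ} (σ : Fin k → G)
    (H : Subgroup G) : Prop :=
  ∃ φ : List (Fin k × Bool) → Bool, Computable φ ∧
    ∀ w : List (Fin k × Bool), (φ w = true ↔ wordVal σ w ∈ H)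

/-- `G` has decidable word problem w.r.t. `σ`. -/
def DecidableWordProblem {G : Type*} [Group G] {k : ℕ} (σ : Fin k → G) : Prop :=
  ∃ φ : List (Fin k × Bool) → Bool, Computable φ ∧
    ∀ w : List (Fin k × Bool), (φ w = true ↔ wordVal σ w = 1)

/-- The set of configurations on the free group matching a coded pattern: a pattern is
coded as a list of pairs (code of a group element, code of a letter). -/
def codedCylinder {k : ℕ} {A : Type*} [Encodable A] (p : List (ℕ × ℕ)) :
    Set (FreeGroup (Fin k) → A) :=
  {x | ∀ q ∈ p, ∀ g : FreeGroup (Fin k),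
    Encodable.encode g = q.1 → Encodable.encode (x g) = q.2}

/-- `X` is an effective subshift: the complement of its pullback to the free group is the
union of the cylinders of a computably enumerable sequence of finitely supported patterns. -/
def IsEffective {G : Type*} [Group G] {k : ℕ} (σ : Fin k → G) {A : Type*} [Encodable A]
    (X : Set (G → A)) : Prop :=
  ∃ f : ℕ → List (ℕ × ℕ), Computable f ∧
    (pullback (cover σ) X)ᶜ = ⋃ n, codedCylinder (f n)

/-! ### Degree spectra -/

/-- The Medvedev degree of `P` belongs to `M_SFT(G)`: some nonempty `G`-SFT has the
Medvedev degree of `P`. -/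
def IsSFTDeg {G : Type*} [Group G] {k : ℕ} (σ : Fin k → G) (P : Set (ℕ → ℕ)) : Prop :=
  ∃ (n : ℕ) (X : Set (G → Fin n)), IsSFT X ∧ X.Nonempty ∧
    BaireEquiv (mSet (pullback (cover σ) X)) P

/-- The Medvedev degree of `P` belongs to `M_sof(G)`. -/
def IsSoficDeg {G : Type*} [Group G] {k : ℕ} (σ : Fin k → G) (P : Set (ℕ → ℕ)) : Prop :=
  ∃ (n : ℕ) (X : Set (G → Fin n)), IsSofic X ∧ X.Nonempty ∧
    BaireEquiv (mSet (pullback (cover σ) X)) P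

/-- The Medvedev degree of `P` belongs to `M_eff(G)`. -/
def IsEffDeg {G : Type*} [Group G] {k : ℕ} (σ : Fin k → G) (P : Set (ℕ → ℕ)) : Prop :=
  ∃ (n : ℕ) (X : Set (G → Fin n)), IsSubshift X ∧ IsEffective σ X ∧ X.Nonempty ∧
    BaireEquiv (mSet (pullback (cover σ) X)) P

/-! ### Word metrics and quasi-isometries -/

/-- The word length of `g` w.r.t. the (symmetric) generating map `σ`. -/
noncomputable def wordNorm {G : Type*} [Group G] {k : ℕ} (σ : Fin k → G) (g : G) : ℕ :=
  sInf {n | ∃ w : List (Fin k), w.length = n ∧ (w.map σ).prod = g}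

/-- The word metric on `G` w.r.t. `σ`, as a real number. -/
noncomputable def wordDist {G : Type*} [Group G] {k : ℕ} (σ : Fin k → G) (g g' : G) : ℝ :=
  (wordNorm σ (g⁻¹ * g') : ℝ)

/-- `f : G → H` is a quasi-isometry w.r.t. the word metrics given by `σ` and `τ`. -/
def IsQIGroups {G H : Type*} [Group G] [Group H] {k r : ℕ} (σ : Fin k → G)
    (τ : Fin r → H) (f : G → H) : Prop :=
  ∃ C : ℝ, 1 ≤ C ∧
    (∀ g g' : G, (1 / C) * wordDist σ g g' - C ≤ wordDist τ (f g) (f g') ∧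
      wordDist τ (f g) (f g') ≤ C * wordDist σ g g' + C) ∧
    ∀ h : H, ∃ g : G, wordDist τ h (f g) ≤ C

/-- `f : G → Y` is a quasi-isometry from the group `G` (with word metric from `σ`) to the
metric space `Y`. -/
def IsQIToSpace {G : Type*} [Group G] {k : ℕ} (σ : Fin k → G) {Y : Type*}
    [MetricSpace Y] (f : G → Y) : Prop :=
  ∃ C : ℝ, 1 ≤ C ∧
    (∀ g g' : G, (1 / C) * wordDist σ g g' - C ≤ dist (f g) (f g') ∧
      dist (f g) (f g') ≤ C * wordDist σ g g' + C) ∧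
    ∀ y : Y, ∃ g : G, dist y (f g) ≤ C

/-- `f : G → H` is computable w.r.t. the generating maps `σ` and `τ`: some computable map
on words sends each word representing `g` to a word representing `f g`. -/
def ComputableMap {G H : Type*} [Group G] [Group H] {k r : ℕ} (σ : Fin k → G)
    (τ : Fin r → H) (f : G → H) : Prop :=
  ∃ φ : List (Fin k × Bool) → List (Fin r × Bool), Computable φ ∧
    ∀ w : List (Fin k × Bool), wordVal τ (φ w) = f (wordVal σ w)

end MedvedevFormal

/-!
Choosing preimages of the generators through the surjections `F(S_G) → G → H` and
`F(S_H) → H` yields homomorphisms `F(S_H) → F(S_G)` and `F(S_G) → F(S_H)` commuting with the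
maps onto `H`, so each pullback of `X` to a free group is obtained from the other by
precomposition. A homomorphism of finitely generated free groups is primitive recursive on
reduced words, and precomposition with a primitive recursive map of index sets is a Medvedev
reduction: every output coordinate copies one input coordinate at a computable address.
-/

namespace FreeGroup

theorem mk_flatMap_toWord {α β : Type*} [DecidableEq β] (f : α → FreeGroup β)
    (L : List (α × Bool)) :
    mk (L.flatMap fun p => (cond p.2 (f p.1) (f p.1)⁻¹).toWord) = lift f (mk L) := by
  rw [lift_mk]
  induction L with
  | nil => simp [← one_eq_mk]
  | cons x L ih =>
      rw [List.flatMap_cons, ← mul_mk, ih, List.map_cons, List.prod_cons, mk_toWord]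

variable {α β : Type*} [Primcodable α] [DecidableEq α] [Primcodable β] [DecidableEq β]

theorem primrec_reduce : Primrec (reduce : List (α × Bool) → List (α × Bool)) := by
  let step : (α × Bool) × List (α × Bool) → List (α × Bool) := fun q =>
    List.casesOn q.2 [q.1] fun hd tl =>
      if q.1.1 = hd.1 ∧ q.1.2 = !hd.2 then tl else q.1 :: hd :: tl
  have hcancel : PrimrecPred
      fun r : ((α × Bool) × List (α × Bool)) × (α × Bool) × List (α × Bool) =>
      r.1.1.1 = r.2.1.1 ∧ r.1.1.2 = !r.2.1.2 :=
    PrimrecPred.and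
      (Primrec.eq.comp ((Primrec.fst.comp Primrec.fst).comp Primrec.fst)
        ((Primrec.fst.comp Primrec.fst).comp Primrec.snd))
      (Primrec.eq.comp ((Primrec.snd.comp Primrec.fst).comp Primrec.fst)
        ((Primrec.dom_bool Bool.not).comp ((Primrec.snd.comp Primrec.fst).comp Primrec.snd)))
  have hstep : Primrec step :=
    Primrec.list_casesOn Primrec.snd (Primrec.list_cons.comp Primrec.fst (Primrec.const []))
      (Primrec.ite hcancel (Primrec.snd.comp Primrec.snd)
        (Primrec.list_cons.comp (Primrec.fst.comp Primrec.fst)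
          (Primrec.list_cons.comp (Primrec.fst.comp Primrec.snd)
            (Primrec.snd.comp Primrec.snd)))).to₂
  have hfold : ∀ L : List (α × Bool), L.foldr (fun x acc => step (x, acc)) [] = reduce L := by
    intro L
    induction L with
    | nil => rfl
    | cons x L ih => rw [List.foldr_cons, ih, reduce.cons]
  exact (Primrec.list_foldr Primrec.id (Primrec.const []) (hstep.comp Primrec.snd).to₂).of_eq
    hfold

/-- Built on `freeGroupEncodable` itself, so that Medvedev degrees of configurations on free
groups are the same whether read through this instance or the plain encoding. -/
instance : Primcodable (FreeGroup α) :=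
  @Primcodable.mk _ MedvedevFormal.freeGroupEncodable <| Primrec.nat_iff.mp <|
    (Primrec.encode.comp (Primrec.option_map (Primrec.decode (α := List (α × Bool)))
      (primrec_reduce.comp Primrec.snd).to₂)).of_eq fun n => by
      change _ = Encodable.encode ((Encodable.decode (α := List (α × Bool)) n).bind
        fun L => some (mk L))
      cases Encodable.decode (α := List (α × Bool)) n
      · rfl
      · exact congrArg Nat.succ (congrArg Encodable.encode toWord_mk.symm)

theorem primrec_toWord : Primrec (toWord : FreeGroup α → List (α × Bool)) :=
  Primrec.encode_iff.mp Primrec.encode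

theorem primrec_mk : Primrec (mk : List (α × Bool) → FreeGroup α) :=
  Primrec.encode_iff.mp <| (Primrec.encode.comp primrec_reduce).of_eq fun _ =>
    congrArg Encodable.encode toWord_mk.symm

theorem primrec_lift [Finite α] (f : α → FreeGroup β) : Primrec (lift f) := by
  refine (primrec_mk.comp (Primrec.list_flatMap primrec_toWord
    ((Primrec.dom_finite fun p : α × Bool => (cond p.2 (f p.1) (f p.1)⁻¹).toWord).comp
      Primrec.snd).to₂)).of_eq fun g => ?_
  exact (mk_flatMap_toWord f g.toWord).trans (congrArg _ mk_toWord)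

theorem primrec_monoidHom [Finite α] (φ : FreeGroup α →* FreeGroup β) : Primrec φ :=
  lift.apply_symm_apply φ ▸ primrec_lift _

theorem exists_lift_of_surjective {γ K G : Type*} [Group K] [Group G] (ψ : FreeGroup γ →* G)
    {π : K →* G} (hπ : Function.Surjective π) :
    ∃ ψ' : FreeGroup γ →* K, ∀ g, π (ψ' g) = ψ g :=
  ⟨lift fun a => Function.surjInv hπ (ψ (of a)), fun g => DFunLike.congr_fun
    (ext_hom (f := π.comp (lift _)) (g := ψ) fun a => by simp [Function.surjInv_eq hπ]) g⟩

end FreeGroup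

namespace MedvedevFormal

section Substitution

variable (c : ℕ → Option ℕ)

def subst (x : ℕ → ℕ) (n : ℕ) : ℕ := (c n).elim 0 x

/-- The number of leading output coordinates of `subst c` that the finite prefix `L` of the
input already determines. -/
def substLength (L : List ℕ) : ℕ :=
  (List.range L.length).findIdx fun j => !(c j).all (· < L.length)

def substPrefix (L : List ℕ) : List ℕ :=
  (List.range (substLength c L)).map fun j => (c j).elim 0 (L.getD · 0)

variable {c}

theorem lt_substLength_iff {L : List ℕ} {n : ℕ} :
    n < substLength c L ↔ n < L.length ∧ ∀ j ≤ n, (c j).all (· < L.length) := by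
  simp [substLength, List.lt_findIdx_iff]

theorem substLength_mono {L₁ L₂ : List ℕ} (h : L₁ <+: L₂) :
    substLength c L₁ ≤ substLength c L₂ := by
  refine le_of_forall_lt fun n hn => ?_
  obtain ⟨hn, hall⟩ := lt_substLength_iff.mp hn
  refine lt_substLength_iff.mpr ⟨hn.trans_le h.length_le, fun j hj => ?_⟩
  have hj := hall j hj
  rcases hcj : c j with _ | m
  · rfl
  · simp only [hcj, Option.all_some, decide_eq_true_eq] at hj ⊢
    exact hj.trans_le h.length_le

theorem substPrefix_mono {L₁ L₂ : List ℕ} (h : L₁ <+: L₂) :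
    substPrefix c L₁ <+: substPrefix c L₂ := by
  obtain ⟨d, hd⟩ := Nat.exists_eq_add_of_le (substLength_mono (c := c) h)
  rw [substPrefix, substPrefix, hd, List.range_add, List.map_append]
  refine List.map_congr_left (fun j hj => ?_) ▸ List.prefix_append _ _
  have hj := (lt_substLength_iff.mp (List.mem_range.mp hj)).2 j le_rfl
  rcases hcj : c j with _ | m
  · rfl
  · simp only [hcj, Option.all_some, decide_eq_true_eq] at hj
    obtain ⟨t, rfl⟩ := h
    exact List.getD_append L₁ t 0 m hj

theorem getD_pref {x : ℕ → ℕ} {k m : ℕ} (hm : m < k) : (pref x k).getD m 0 = x m := by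
  simp [pref, List.getD_eq_getElem?_getD, hm]

theorem getElem?_substPrefix_pref (x : ℕ → ℕ) (n : ℕ) :
    ∃ k, (substPrefix c (pref x k))[n]? = some (subst c x n) := by
  -- `B` bounds the input addresses read by the first `n + 1` output coordinates.
  set B := (Finset.range (n + 1)).sup fun j => (c j).elim 0 Nat.succ
  have hB : ∀ j ≤ n, ∀ m, c j = some m → m < B := fun j hj m hm => by
    have := Finset.le_sup (f := fun j => (c j).elim 0 Nat.succ)
      (Finset.mem_range.mpr (show j < n + 1 by omega))
    simp only [hm, Option.elim_some] at this
    omega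
  refine ⟨n + 1 + B, ?_⟩
  have hn : n < substLength c (pref x (n + 1 + B)) := by
    refine lt_substLength_iff.mpr ⟨by simp [pref]; omega, fun j hj => ?_⟩
    rcases hcj : c j with _ | m
    · rfl
    · simpa [pref] using (hB j hj m hcj).trans_le (Nat.le_add_left _ _)
  rw [substPrefix, List.getElem?_map, List.getElem?_range hn, Option.map_some, subst]
  rcases hcn : c n with _ | m
  · rfl
  · exact congrArg some (getD_pref (by have := hB n le_rfl m hcn; omega))

theorem primrec_substPrefix (hc : Primrec c) : Primrec (substPrefix c) := by
  have hundetermined : Primrec₂ fun (L : List ℕ) (j : ℕ) => !(c j).all (· < L.length) :=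
    (Primrec.not.comp (Primrec.option_casesOn (hc.comp Primrec.snd) (Primrec.const true)
      (Primrec.nat_lt.decide.comp Primrec.snd (Primrec.list_length.comp
        (Primrec.fst.comp Primrec.fst))).to₂)).of_eq fun q => by dsimp only; cases c q.2 <;> rfl
  have hentry : Primrec₂ fun (L : List ℕ) (j : ℕ) => (c j).elim 0 (L.getD · 0) :=
    (Primrec.option_casesOn (hc.comp Primrec.snd) (Primrec.const 0)
      ((Primrec.list_getD 0).comp (Primrec.fst.comp Primrec.fst) Primrec.snd).to₂).of_eq
      fun q => by dsimp only; cases c q.2 <;> rfl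
  exact Primrec.list_map (Primrec.list_range.comp <|
    Primrec.list_findIdx (Primrec.list_range.comp Primrec.list_length) hundetermined) hentry

theorem baireLE_of_subst (hc : Primrec c) {P Q : Set (ℕ → ℕ)}
    (h : ∀ x ∈ Q, subst c x ∈ P) : BaireLE P Q :=
  ⟨substPrefix c, (primrec_substPrefix hc).to_comp, fun _ _ => substPrefix_mono,
    fun x hx => ⟨subst c x, h x hx, getElem?_substPrefix_pref x⟩⟩

end Substitution

section Pullback

theorem confFun_comp {α β A : Type*} [Encodable α] [Encodable β] [Encodable A]
    (θ : α → β) (y : β → A) :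
    confFun (y ∘ θ) =
      subst (fun n => (Encodable.decode n : Option α).map (Encodable.encode ∘ θ))
        (confFun y) := by
  funext n
  rcases hn : Encodable.decode (α := α) n with _ | g
  · simp [confFun, subst, hn]
  · simp [confFun, subst, hn, Encodable.encodek]

theorem medLE_of_comp {α β A : Type*} [Primcodable α] [Primcodable β] [Encodable A]
    {θ : α → β} (hθ : Primrec θ) {P : Set (α → A)} {Q : Set (β → A)}
    (h : ∀ y ∈ Q, y ∘ θ ∈ P) : MedLE P Q := by
  refine baireLE_of_subst
    (Primrec.option_map Primrec.decode (Primrec.encode.comp (hθ.comp Primrec.snd)).to₂) ?_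
  rintro _ ⟨y, hy, rfl⟩
  exact ⟨y ∘ θ, h y hy, confFun_comp θ y⟩

variable {K K' G H A : Type*} [Group K] [Group K'] [Group G] [Group H]

theorem pullback_pullback (π : K →* G) (ρ : G →* H) (X : Set (H → A)) :
    pullback π (pullback ρ X) = pullback (ρ.comp π) X := by
  simp only [pullback, Set.image_image]
  rfl

theorem medLE_pullback [Primcodable K] [Primcodable K'] [Encodable A] {π : K →* G}
    {π' : K' →* G} {θ : K → K'} (hθ : Primrec θ) (hπ : ∀ g, π' (θ g) = π g)
    (X : Set (G → A)) :
    MedLE (pullback π X) (pullback π' X) :=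
  medLE_of_comp hθ <| by
    rintro _ ⟨x, hx, rfl⟩
    exact ⟨x, hx, funext fun g => congrArg x (hπ g).symm⟩

end Pullback

theorem IsSymmGen.surjective_cover {G : Type*} [Group G] {k : ℕ} {σ : Fin k → G}
    (hσ : IsSymmGen σ) : Function.Surjective (cover σ) :=
  FreeGroup.lift_surjective_iff_closure_range_eq_top.mpr hσ.1

theorem statement1_general {G H : Type*} [Group G] [Group H] {A : Type*} [Encodable A]
    {k l : ℕ} (σ : Fin k → G) (hσ : IsSymmGen σ) (τ : Fin l → H) (hτ : IsSymmGen τ)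
    (ρ : G →* H) (hρ : Function.Surjective ρ)
    (X : Set (H → A)) :
    MedEquiv (pullback (cover τ) X) (pullback (cover σ) (pullback ρ X)) := by
  rw [pullback_pullback]
  have hρσ : Function.Surjective (ρ.comp (cover σ)) := hρ.comp hσ.surjective_cover
  obtain ⟨ψ, hψ⟩ := FreeGroup.exists_lift_of_surjective (cover τ) hρσ
  obtain ⟨χ, hχ⟩ :=
    FreeGroup.exists_lift_of_surjective (ρ.comp (cover σ)) hτ.surjective_cover
  exact ⟨medLE_pullback (FreeGroup.primrec_monoidHom ψ) hψ X,
    medLE_pullback (FreeGroup.primrec_monoidHom χ) hχ X⟩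

/-- For any finitely generated group `G`, epimorphism `ρ : G → H` and subshift
`X ⊆ A^H`, we have `m(X) = m(ρ*(X))`. -/
theorem statement1 {G H : Type*} [Group G] [Group H] {A : Type*} [Finite A] [Encodable A]
    {k l : ℕ} (σ : Fin k → G) (hσ : IsSymmGen σ) (τ : Fin l → H) (hτ : IsSymmGen τ)
    (ρ : G →* H) (hρ : Function.Surjective ρ)
    (X : Set (H → A)) (hX : IsSubshift X) :
    MedEquiv (pullback (cover τ) X) (pullback (cover σ) (pullback ρ X)) :=
  statement1_general σ hσ τ hτ ρ hρ X

end MedvedevFormal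
end

section
/- Consider a short exact sequence of groups 1 → N → G →^ρ H → 1 in which both G and N are finitely generated. If X ⊆ A^H is a subshift of finite type, then the pullback ρ*(X) = {x ∘ ρ : x ∈ X} ⊆ A^G is a subshift of finite type; and if Y ⊆ B^H is a sofic subshift, then ρ*(Y) ⊆ B^G is a sofic subshift. -/
namespace MedvedevFormal

/-!
A configuration on `G` is a pullback along `ρ` exactly when it is constant on the cosets of
`N = ker ρ`, i.e. invariant under right multiplication by the finitely many generators of `N`;
over a finite alphabet, a failure of this invariance is a match of one of finitely many
two-cell patterns. The remaining
constraints of `X` are lifted to `G` along a section of `ρ`. For sofic subshifts, the factor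
map is transported along the same section.
-/

section Pullback

variable {G H A B : Type*} [Group G] [Group H]

theorem shift_comp_monoidHom (ρ : G →* H) (g : G) (x : H → A) :
    shift g (x ∘ ρ) = shift (ρ g) x ∘ ρ := by
  funext h
  simp [shift]

theorem IsSFT.inter {X Y : Set (G → A)} (hX : IsSFT X) (hY : IsSFT Y) : IsSFT (X ∩ Y) := by
  obtain ⟨F, rfl⟩ := hX
  obtain ⟨F', rfl⟩ := hY
  refine ⟨F ++ F', ?_⟩
  ext x
  simp only [Set.mem_inter_iff, Set.mem_ofPred_eq, List.forall_mem_append]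

def kerPat [DecidableEq G] (n : G) (a b : A) : Pattern G A :=
  ⟨{1, n}, fun d => if (d : G) = n then b else a⟩

theorem matchesAt_kerPat_iff [DecidableEq G] {n : G} (hn : n ≠ 1) (a b : A) (g : G)
    (x : G → A) : MatchesAt (kerPat n a b) g x ↔ x g⁻¹ = a ∧ x (g⁻¹ * n) = b := by
  simp only [MatchesAt, Subtype.forall]
  change (∀ d ∈ ({1, n} : Finset G), x (g⁻¹ * d) = if d = n then b else a) ↔ _
  simp [hn.symm]

theorem isSFT_setOf_forall_mul_eq [Finite A] (T : Finset G) :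
    IsSFT {y : G → A | ∀ t ∈ T, ∀ g, y (g * t) = y g} := by
  classical
  have := Fintype.ofFinite A
  -- `t = 1` is excluded: `kerPat 1 a b` would forbid the letter `b` outright.
  refine ⟨((T ×ˢ (Finset.univ : Finset (A × A))).filter
    (fun p => p.1 ≠ 1 ∧ p.2.1 ≠ p.2.2)).toList.map fun p => kerPat p.1 p.2.1 p.2.2, ?_⟩
  ext y
  simp only [Set.mem_ofPred_eq, List.mem_map, Finset.mem_toList, Finset.mem_filter,
    Finset.mem_product, Finset.mem_univ, and_true, forall_exists_index, and_imp, Prod.forall]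
  constructor
  · rintro hy _ t a b ht ht1 hab rfl g hm
    rw [matchesAt_kerPat_iff ht1] at hm
    exact hab (hm.1 ▸ hm.2 ▸ (hy t ht g⁻¹).symm)
  · intro hy t ht g
    by_cases ht1 : t = 1
    · rw [ht1, mul_one]
    by_contra hne
    refine hy _ t (y g) (y (g * t)) ht ht1 (Ne.symm hne) rfl g⁻¹ ?_
    rw [matchesAt_kerPat_iff ht1, inv_inv]
    exact ⟨rfl, rfl⟩

theorem forall_mul_eq_of_mem_closure {T : Set G} {y : G → A}
    (hy : ∀ t ∈ T, ∀ g, y (g * t) = y g) {n : G} (hn : n ∈ Subgroup.closure T) (g : G) :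
    y (g * n) = y g := by
  induction hn using Subgroup.closure_induction generalizing g with
  | mem t ht => exact hy t ht g
  | one => rw [mul_one]
  | mul a b _ _ ha hb => rw [← mul_assoc, hb, ha]
  | inv a _ ha => rw [← ha (g * a⁻¹), inv_mul_cancel_right]

theorem comp_surjInv_comp {ρ : G →* H} (hρ : Function.Surjective ρ) {y : G → A}
    (hy : ∀ n ∈ ρ.ker, ∀ g, y (g * n) = y g) : y ∘ Function.surjInv hρ ∘ ρ = y := by
  funext g
  have hn : g⁻¹ * Function.surjInv hρ (ρ g) ∈ ρ.ker := by
    rw [MonoidHom.mem_ker, map_mul, map_inv, Function.surjInv_eq hρ, inv_mul_cancel]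
  simpa using hy _ hn g

noncomputable def Pattern.lift {ρ : G →* H} (hρ : Function.Surjective ρ) (q : Pattern H A) :
    Pattern G A where
  dom := q.dom.map ⟨Function.surjInv hρ, Function.injective_surjInv hρ⟩
  val d := q.val ⟨ρ d, by
    obtain ⟨e, he, hde⟩ := Finset.mem_map.mp d.2
    rwa [← hde, Function.Embedding.coeFn_mk, Function.surjInv_eq hρ]⟩

theorem matchesAt_lift_comp_iff {ρ : G →* H} (hρ : Function.Surjective ρ) (q : Pattern H A)
    (g : G) (x : H → A) : MatchesAt (q.lift hρ) g (x ∘ ρ) ↔ MatchesAt q (ρ g) x := by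
  simp only [MatchesAt, Pattern.lift, shift, Subtype.forall, Finset.forall_mem_map,
    Function.Embedding.coeFn_mk, Function.comp_apply, map_mul, map_inv,
    Function.surjInv_eq hρ]

theorem pullback_eq_inter {ρ : G →* H} (hρ : Function.Surjective ρ) {T : Set G}
    (hT : Subgroup.closure T = ρ.ker) (F : List (Pattern H A)) :
    pullback ρ {x | ∀ p ∈ F, ∀ h, ¬MatchesAt p h x} =
      {y | ∀ t ∈ T, ∀ g, y (g * t) = y g} ∩
        {y | ∀ p ∈ F.map (Pattern.lift hρ), ∀ g, ¬MatchesAt p g y} := by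
  ext y
  simp only [pullback, Set.mem_image, Set.mem_inter_iff, Set.mem_ofPred_eq,
    List.forall_mem_map]
  constructor
  · rintro ⟨x, hx, rfl⟩
    refine ⟨fun t ht g => ?_, fun q hq g => ?_⟩
    · have ht : ρ t = 1 := by rw [← MonoidHom.mem_ker, ← hT]; exact Subgroup.subset_closure ht
      simp [ht]
    · rw [matchesAt_lift_comp_iff]
      exact hx q hq (ρ g)
  · rintro ⟨hper, hlift⟩
    have hy := comp_surjInv_comp hρ fun n hn =>
      forall_mul_eq_of_mem_closure hper (hT ▸ hn)
    refine ⟨y ∘ Function.surjInv hρ, fun q hq h hm => ?_, hy⟩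
    obtain ⟨g, rfl⟩ := hρ h
    rw [← matchesAt_lift_comp_iff hρ, Function.comp_assoc, hy] at hm
    exact hlift q hq g hm

theorem isSFT_pullback [Finite A] {ρ : G →* H} (hρ : Function.Surjective ρ)
    (hN : Group.FG ρ.ker) {X : Set (H → A)} (hX : IsSFT X) : IsSFT (pullback ρ X) := by
  obtain ⟨T, hT⟩ := (Group.fg_iff_subgroup_fg _).mp hN
  obtain ⟨F, rfl⟩ := hX
  rw [pullback_eq_inter hρ hT]
  exact (isSFT_setOf_forall_mul_eq T).inter ⟨_, rfl⟩

theorem comp_comp_surjInv {ρ : G →* H} (hρ : Function.Surjective ρ) (x : H → A) :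
    x ∘ ρ ∘ Function.surjInv hρ = x := by
  funext h
  simp

noncomputable def pullbackMap {ρ : G →* H} (hρ : Function.Surjective ρ)
    (φ : (H → A) → (H → B)) (y : G → A) : G → B :=
  φ (y ∘ Function.surjInv hρ) ∘ ρ

theorem pullbackMap_comp {ρ : G →* H} (hρ : Function.Surjective ρ) (φ : (H → A) → (H → B))
    (x : H → A) : pullbackMap hρ φ (x ∘ ρ) = φ x ∘ ρ := by
  rw [pullbackMap, Function.comp_assoc, comp_comp_surjInv]

theorem image_pullbackMap_pullback {ρ : G →* H} (hρ : Function.Surjective ρ)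
    (φ : (H → A) → (H → B)) (Z : Set (H → A)) :
    pullbackMap hρ φ '' pullback ρ Z = pullback ρ (φ '' Z) := by
  simp only [pullback, Set.image_image, pullbackMap_comp]

theorem isMorphism_pullbackMap {ρ : G →* H} (hρ : Function.Surjective ρ) {Z : Set (H → A)}
    {Y : Set (H → B)} {φ : (H → A) → (H → B)} (hφ : IsMorphism Z Y φ) :
    IsMorphism (pullback ρ Z) (pullback ρ Y) (pullbackMap hρ φ) := by
  obtain ⟨hmaps, hcont, hequiv⟩ := hφ
  refine ⟨?_, ?_, ?_⟩
  · rintro _ ⟨x, hx, rfl⟩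
    exact ⟨φ x, hmaps hx, (pullbackMap_comp hρ φ x).symm⟩
  · let _ : TopologicalSpace A := ⊥
    let _ : TopologicalSpace B := ⊥
    have hsection : Set.MapsTo (· ∘ Function.surjInv hρ) (pullback ρ Z) Z := by
      rintro _ ⟨x, hx, rfl⟩
      simpa only [Function.comp_assoc, comp_comp_surjInv] using hx
    exact (Pi.continuous_precomp ρ).comp_continuousOn
      (hcont.comp (Pi.continuous_precomp _).continuousOn hsection)
  · rintro _ ⟨x, hx, rfl⟩ g
    rw [shift_comp_monoidHom, pullbackMap_comp, pullbackMap_comp, hequiv x hx,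
      shift_comp_monoidHom]

theorem isSofic_pullback {ρ : G →* H} (hρ : Function.Surjective ρ) (hN : Group.FG ρ.ker)
    {Y : Set (H → B)} (hY : IsSofic Y) : IsSofic (pullback ρ Y) := by
  obtain ⟨C, hC, Z, φ, hZ, hφ, rfl⟩ := hY
  exact ⟨C, hC, pullback ρ Z, pullbackMap hρ φ, isSFT_pullback hρ hN hZ,
    isMorphism_pullbackMap hρ hφ, image_pullbackMap_pullback hρ φ Z⟩

end Pullback

theorem statement4_general {G H : Type*} [Group G] [Group H] {A B : Type*} [Finite A]
    (ρ : G →* H) (hρ : Function.Surjective ρ)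
    (hN : Group.FG ↥ρ.ker)
    (X : Set (H → A)) (hX : IsSFT X) (Y : Set (H → B)) (hY : IsSofic Y) :
    IsSFT (pullback ρ X) ∧ IsSofic (pullback ρ Y) :=
  ⟨isSFT_pullback hρ hN hX, isSofic_pullback hρ hN hY⟩

/-- Given a short exact sequence `1 → N → G → H → 1` with `G` and `N` finitely
generated, the pullback of an SFT is an SFT and the pullback of a sofic subshift is
sofic. -/
theorem statement4 {G H : Type*} [Group G] [Group H] {A B : Type*} [Finite A] [Finite B]
    (ρ : G →* H) (hρ : Function.Surjective ρ)
    (hG : Group.FG G) (hN : Group.FG ↥ρ.ker)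
    (X : Set (H → A)) (hX : IsSFT X) (Y : Set (H → B)) (hY : IsSofic Y) :
    IsSFT (pullback ρ X) ∧ IsSofic (pullback ρ Y) :=
  statement4_general ρ hρ hN X hX Y hY

end MedvedevFormal
end

section
/- Let G and H be finitely generated groups, S a finite symmetric generating set of H, F ⊆ G a finite set, and let T ⊆ B^G be the subshift of bounded actions with parameters S, F. Then for every subshift X ⊆ A^H, m(T[X]) ≥ m(T) ∨ m(X). -/
namespace MedvedevFormal

/-- Following the arrows encoded by the configuration `y` along the word `w`,
starting at `g`. -/
def phiWord {G : Type*} [Group G] {r : ℕ} {F : Finset G}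
    (y : G → Fin r → ↥F) (g : G) (w : List (Fin r)) : G :=
  w.foldl (fun p s => p * ((y p s : G))) g

/-- The subshift of bounded actions with parameters `τ` (the generators of `H`) and the
finite set `F ⊆ G`; its alphabet is `B = F^S`. -/
def boundedActionsShift {G H : Type*} [Group G] [Group H] {r : ℕ}
    (τ : Fin r → H) (F : Finset G) : Set (G → Fin r → ↥F) :=
  {y | ∀ g : G, ∀ w : List (Fin r), (w.map τ).prod = 1 → phiWord y g w = g}

/-- The subshift `T[X]`: pairs `(x, y)` with `y ∈ T` such that for every `g ∈ G` the
configuration `h ↦ x (Φ(g, y, h))` belongs to `X`. -/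
def TXshift {G H : Type*} [Group G] [Group H] {r : ℕ} (τ : Fin r → H) (F : Finset G)
    {A : Type*} (X : Set (H → A)) : Set (G → A × (Fin r → ↥F)) :=
  {z | (fun g => (z g).2) ∈ boundedActionsShift τ F ∧
    ∀ g : G, ∃ c ∈ X, ∀ w : List (Fin r),
      c ((w.map τ).prod) = (z (phiWord (fun g' => (z g').2) g w)).1}

section AuxLk

variable {α β : Type*}

/-- Table lookup in an association list. -/
def lk [DecidableEq α] (L : List (α × β)) (a : α) : Option β :=
  L.foldl (fun acc p => if p.1 = a then some p.2 else acc) none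

theorem lk_foldl [DecidableEq α] (a : α) (b : β) :
    ∀ (L : List (α × β)) (acc : Option β),
      (∀ p ∈ L, p.1 = a → p.2 = b) → (acc = some b ∨ (a, b) ∈ L) →
      L.foldl (fun acc p => if p.1 = a then some p.2 else acc) acc = some b := by
  intro L
  induction L with
  | nil =>
    rintro acc h (rfl | h2)
    · rfl
    · cases h2
  | cons p L ih =>
    intro acc h hd
    rw [List.foldl_cons]
    by_cases hp : p.1 = a
    · refine ih _ (fun q hq => h q (List.mem_cons_of_mem _ hq)) (Or.inl ?_)
      rw [if_pos hp, h p List.mem_cons_self hp]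
    · rw [if_neg hp]
      refine ih _ (fun q hq => h q (List.mem_cons_of_mem _ hq)) ?_
      rcases hd with h1 | h2
      · exact Or.inl h1
      · rcases List.mem_cons.1 h2 with heq | h3
        · exact absurd (congrArg Prod.fst heq.symm) hp
        · exact Or.inr h3

theorem lk_eq [DecidableEq α] {L : List (α × β)} {a : α} {b : β}
    (h1 : (a, b) ∈ L) (h2 : ∀ p ∈ L, p.1 = a → p.2 = b) : lk L a = some b :=
  lk_foldl a b L none h2 (Or.inr h1)

theorem lk_primrec [Primcodable α] [Primcodable β] [DecidableEq α] (L : List (α × β)) :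
    Primrec (lk L) := by
  have h : Primrec₂ fun (a : α) (q : Option β × (α × β)) =>
      if q.2.1 = a then some q.2.2 else q.1 :=
    Primrec.ite
      (Primrec.eq.comp (Primrec.fst.comp (Primrec.snd.comp Primrec.snd)) Primrec.fst)
      (Primrec.option_some.comp (Primrec.snd.comp (Primrec.snd.comp Primrec.snd)))
      (Primrec.fst.comp Primrec.snd)
  exact (Primrec.list_foldl (.const L) (.const none) h).of_eq fun a => rfl

end AuxLk

section AuxChain

/-- Incremental extraction of consecutive defined values. -/
def chainF (e : ℕ → Option ℕ) (j : ℕ) : List ℕ :=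
  Nat.rec [] (fun i p => if p.length = i then p ++ (e i).toList else p) j

theorem chainF_succ (e : ℕ → Option ℕ) (j : ℕ) :
    chainF e (j + 1) =
      if (chainF e j).length = j then chainF e j ++ (e j).toList else chainF e j := rfl

theorem chainF_length_le (e : ℕ → Option ℕ) : ∀ j, (chainF e j).length ≤ j := by
  intro j
  induction j with
  | zero => exact le_rfl
  | succ j ih =>
    rw [chainF_succ]
    split
    · rw [List.length_append]
      have : (e j).toList.length ≤ 1 := by cases e j <;> simp
      omega
    · omega

theorem chainF_succ_prefix (e : ℕ → Option ℕ) (j : ℕ) : chainF e j <+: chainF e (j + 1) := by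
  rw [chainF_succ]
  split
  · exact List.prefix_append _ _
  · exact List.prefix_refl _

theorem chainF_prefix_le {e : ℕ → Option ℕ} {j j' : ℕ} (h : j ≤ j') :
    chainF e j <+: chainF e j' := by
  induction j' with
  | zero => rw [Nat.le_zero.1 h]
  | succ j' ih =>
    rcases Nat.lt_or_ge j (j' + 1) with h1 | h2
    · exact (ih (Nat.lt_succ_iff.1 h1)).trans (chainF_succ_prefix e j')
    · rw [Nat.le_antisymm h h2]

theorem chainF_mono {e₁ e₂ : ℕ → Option ℕ} (H : ∀ i v, e₁ i = some v → e₂ i = some v) :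
    ∀ j, chainF e₁ j <+: chainF e₂ j ∧
      ((chainF e₁ j).length = j → chainF e₂ j = chainF e₁ j) := by
  intro j
  induction j with
  | zero => exact ⟨List.prefix_refl _, fun _ => rfl⟩
  | succ j ih =>
    obtain ⟨h1, h2⟩ := ih
    by_cases hc : (chainF e₁ j).length = j
    · have he2 : chainF e₂ j = chainF e₁ j := h2 hc
      rw [chainF_succ, chainF_succ, he2, if_pos hc, if_pos hc]
      constructor
      · cases h : e₁ j with
        | none => simp [h]
        | some v => rw [H j v h]
      · intro hlen
        cases h : e₁ j with
        | none =>
          rw [h] at hlen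
          simp at hlen
          omega
        | some v => rw [H j v h]
    · have hne : chainF e₁ (j + 1) = chainF e₁ j := by rw [chainF_succ, if_neg hc]
      rw [hne]
      refine ⟨h1.trans (chainF_succ_prefix e₂ j), fun hlen => ?_⟩
      exact absurd hlen (by have := chainF_length_le e₁ j; omega)

theorem chainF_full {e : ℕ → Option ℕ} {ys : ℕ → ℕ} :
    ∀ j, (∀ i < j, e i = some (ys i)) → chainF e j = (List.range j).map ys := by
  intro j
  induction j with
  | zero => intro _; rfl
  | succ j ih =>
    intro h
    have hj : chainF e j = (List.range j).map ys := ih fun i hi => h i (Nat.lt_succ_of_lt hi)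
    rw [chainF_succ, hj, if_pos (by simp), h j (Nat.lt_succ_self j), List.range_succ]
    simp

theorem prefix_getElem? {l₁ l₂ : List ℕ} (h : l₁ <+: l₂) {i : ℕ} {v : ℕ}
    (hv : l₁[i]? = some v) : l₂[i]? = some v := by
  obtain ⟨t, rfl⟩ := h
  have hi : i < l₁.length := by
    by_contra hx
    rw [List.getElem?_eq_none (by omega)] at hv
    cases hv
  rw [List.getElem?_append, if_pos hi]
  exact hv

theorem pref_getElem? (x : ℕ → ℕ) {i K : ℕ} (h : i < K) : (pref x K)[i]? = some (x i) := by
  rw [pref, List.getElem?_map, List.getElem?_range h, Option.map_some]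

end AuxChain

section AuxEval

variable {k r : ℕ}

/-- One step of the simulated walk on the free group. -/
def stepF (stepL : List ((ℕ × Fin r) × List (Fin k × Bool))) (l : List ℕ)
    (ou : Option (List (Fin k × Bool))) (s : Fin r) : Option (List (Fin k × Bool)) :=
  ou.bind fun u => (l[Encodable.encode u]?).bind fun v =>
    (lk stepL (v, s)).map fun d => u ++ d

/-- The finite-prefix evaluation functional. -/
def evalF (evenL fstL : List (ℕ × ℕ)) (stepL : List ((ℕ × Fin r) × List (Fin k × Bool)))
    (cv : Fin r × Bool → Fin r) (l : List ℕ) (m : ℕ) : Option ℕ :=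
  if m % 2 = 0 then (l[m / 2]?).bind (lk evenL)
  else
    Option.casesOn (Encodable.decode (α := List (Fin r × Bool)) (m / 2)) (some 0) fun u =>
      ((u.map cv).foldl (stepF stepL l) (some [])).bind fun U =>
        (l[Encodable.encode U]?).bind (lk fstL)

theorem foldl_stepF_none (stepL : List ((ℕ × Fin r) × List (Fin k × Bool))) (l : List ℕ) :
    ∀ w : List (Fin r), w.foldl (stepF stepL l) none = none := by
  intro w
  induction w with
  | nil => rfl
  | cons s w ih => rw [List.foldl_cons]; exact ih

theorem foldl_stepF_mono {stepL : List ((ℕ × Fin r) × List (Fin k × Bool))} {l₁ l₂ : List ℕ}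
    (h : l₁ <+: l₂) :
    ∀ (w : List (Fin r)) (u0 : List (Fin k × Bool)) (U : List (Fin k × Bool)),
      w.foldl (stepF stepL l₁) (some u0) = some U →
      w.foldl (stepF stepL l₂) (some u0) = some U := by
  intro w
  induction w with
  | nil => intro u0 U h1; exact h1
  | cons s w ih =>
    intro u0 U h1
    rw [List.foldl_cons] at h1 ⊢
    rcases hst : stepF stepL l₁ (some u0) s with _ | u1
    · rw [hst, foldl_stepF_none] at h1; cases h1
    · rw [hst] at h1
      have hst2 : stepF stepL l₂ (some u0) s = some u1 := by
        rw [stepF, Option.bind_some] at hst ⊢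
        obtain ⟨v, hv, hrest⟩ := Option.bind_eq_some_iff.1 hst
        rw [prefix_getElem? h hv, Option.bind_some]
        exact hrest
      rw [hst2]
      exact ih u1 U h1

theorem evalF_mono {evenL fstL : List (ℕ × ℕ)}
    {stepL : List ((ℕ × Fin r) × List (Fin k × Bool))} {cv : Fin r × Bool → Fin r}
    {l₁ l₂ : List ℕ} (h : l₁ <+: l₂) {m v : ℕ}
    (hm : evalF evenL fstL stepL cv l₁ m = some v) :
    evalF evenL fstL stepL cv l₂ m = some v := by
  rw [evalF] at hm ⊢
  by_cases hpar : m % 2 = 0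
  · rw [if_pos hpar] at hm ⊢
    obtain ⟨v', hv', hrest⟩ := Option.bind_eq_some_iff.1 hm
    rw [prefix_getElem? h hv', Option.bind_some]
    exact hrest
  · rw [if_neg hpar] at hm ⊢
    rcases hdec : (Encodable.decode (α := List (Fin r × Bool)) (m / 2)) with _ | u
    · rw [hdec] at hm; exact hm
    · rw [hdec] at hm
      have hm' : (((u.map cv).foldl (stepF stepL l₁) (some [])).bind fun U =>
          (l₁[Encodable.encode U]?).bind (lk fstL)) = some v := hm
      show (((u.map cv).foldl (stepF stepL l₂) (some [])).bind fun U =>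
          (l₂[Encodable.encode U]?).bind (lk fstL)) = some v
      obtain ⟨U, hU, hrest⟩ := Option.bind_eq_some_iff.1 hm'
      rw [show ((u.map cv).foldl (stepF stepL l₂) (some [])) = some U from
        foldl_stepF_mono h _ _ _ hU, Option.bind_some]
      obtain ⟨v2, hv2, hrest2⟩ := Option.bind_eq_some_iff.1 hrest
      rw [prefix_getElem? h hv2, Option.bind_some]
      exact hrest2

theorem stepF_primrec (stepL : List ((ℕ × Fin r) × List (Fin k × Bool))) :
    Primrec fun q : List ℕ × (Option (List (Fin k × Bool)) × Fin r) =>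
      stepF stepL q.1 q.2.1 q.2.2 := by
  have h3 : Primrec₂ fun
      (y : ((List ℕ × (Option (List (Fin k × Bool)) × Fin r)) × List (Fin k × Bool)) × ℕ)
      (d : List (Fin k × Bool)) => y.1.2 ++ d :=
    Primrec.list_append.comp (Primrec.snd.comp (Primrec.fst.comp Primrec.fst)) Primrec.snd
  have h2 : Primrec₂ fun
      (z : (List ℕ × (Option (List (Fin k × Bool)) × Fin r)) × List (Fin k × Bool))
      (v : ℕ) => (lk stepL (v, z.1.2.2)).map fun d => z.2 ++ d :=
    Primrec.option_map
      ((lk_primrec stepL).comp (Primrec.pair Primrec.snd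
        (Primrec.snd.comp (Primrec.snd.comp (Primrec.fst.comp Primrec.fst))))) h3
  have h1 : Primrec₂ fun (q : List ℕ × (Option (List (Fin k × Bool)) × Fin r))
      (u : List (Fin k × Bool)) =>
      (q.1[Encodable.encode u]?).bind fun v => (lk stepL (v, q.2.2)).map fun d => u ++ d :=
    Primrec.option_bind
      (Primrec.list_getElem?.comp (Primrec.fst.comp Primrec.fst)
        (Primrec.encode.comp Primrec.snd)) h2
  exact (Primrec.option_bind (Primrec.fst.comp Primrec.snd) h1).of_eq fun q => rfl

theorem evalF_primrec (evenL fstL : List (ℕ × ℕ))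
    (stepL : List ((ℕ × Fin r) × List (Fin k × Bool))) (cv : Fin r × Bool → Fin r) :
    Primrec₂ (evalF evenL fstL stepL cv) := by
  have hhalf : Primrec fun p : List ℕ × ℕ => p.2 / 2 :=
    Primrec.nat_div.comp Primrec.snd (Primrec.const 2)
  have hcond : PrimrecPred fun p : List ℕ × ℕ => p.2 % 2 = 0 :=
    Primrec.eq.comp (Primrec.nat_mod.comp Primrec.snd (Primrec.const 2)) (Primrec.const 0)
  have hb1 : Primrec fun p : List ℕ × ℕ => (p.1[p.2 / 2]?).bind (lk evenL) :=
    Primrec.option_bind (Primrec.list_getElem?.comp Primrec.fst hhalf)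
      ((lk_primrec evenL).comp Primrec.snd).to₂
  have hmap : Primrec fun q : (List ℕ × ℕ) × List (Fin r × Bool) => q.2.map cv :=
    Primrec.list_map Primrec.snd ((Primrec.dom_finite cv).comp Primrec.snd).to₂
  have hstep' : Primrec₂ fun (q : (List ℕ × ℕ) × List (Fin r × Bool))
      (sp : Option (List (Fin k × Bool)) × Fin r) => stepF stepL q.1.1 sp.1 sp.2 :=
    ((stepF_primrec stepL).comp (Primrec.pair
      (Primrec.fst.comp (Primrec.fst.comp Primrec.fst)) Primrec.snd)).to₂
  have hfold : Primrec fun q : (List ℕ × ℕ) × List (Fin r × Bool) =>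
      (q.2.map cv).foldl (stepF stepL q.1.1) (some ([] : List (Fin k × Bool))) :=
    (Primrec.list_foldl hmap (Primrec.const (some ([] : List (Fin k × Bool)))) hstep').of_eq
      fun q => rfl
  have hfin : Primrec₂ fun (w : (List ℕ × ℕ) × List (Fin r × Bool))
      (U : List (Fin k × Bool)) => (w.1.1[Encodable.encode U]?).bind (lk fstL) :=
    (Primrec.option_bind
      (Primrec.list_getElem?.comp (Primrec.fst.comp (Primrec.fst.comp Primrec.fst))
        (Primrec.encode.comp Primrec.snd))
      ((lk_primrec fstL).comp Primrec.snd).to₂).to₂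
  have hbig : Primrec₂ fun (p : List ℕ × ℕ) (u : List (Fin r × Bool)) =>
      ((u.map cv).foldl (stepF stepL p.1) (some ([] : List (Fin k × Bool)))).bind fun U =>
        (p.1[Encodable.encode U]?).bind (lk fstL) :=
    Primrec.option_bind hfold hfin
  have hb2 : Primrec fun p : List ℕ × ℕ =>
      (Option.casesOn (Encodable.decode (α := List (Fin r × Bool)) (p.2 / 2)) (some 0)
        (fun u => ((u.map cv).foldl (stepF stepL p.1) (some [])).bind fun U =>
          (p.1[Encodable.encode U]?).bind (lk fstL)) : Option ℕ) :=
    Primrec.option_casesOn (Primrec.decode.comp hhalf) (Primrec.const (some 0)) hbig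
  show Primrec fun p : List ℕ × ℕ => evalF evenL fstL stepL cv p.1 p.2
  exact (Primrec.ite hcond hb1 hb2).of_eq fun p => rfl

theorem option_toList_primrec : Primrec (Option.toList : Option ℕ → List ℕ) :=
  (Primrec.option_casesOn Primrec.id (Primrec.const [])
    ((Primrec.list_cons.comp Primrec.snd (Primrec.const [])).to₂)).of_eq
    fun o => by cases o <;> rfl

theorem phiF_primrec (evenL fstL : List (ℕ × ℕ))
    (stepL : List ((ℕ × Fin r) × List (Fin k × Bool))) (cv : Fin r × Bool → Fin r) :
    Primrec fun l : List ℕ => chainF (evalF evenL fstL stepL cv l) l.length := by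
  have hEval : Primrec fun x : List ℕ × (ℕ × List ℕ) =>
      evalF evenL fstL stepL cv x.1 x.2.1 :=
    (evalF_primrec evenL fstL stepL cv).comp Primrec.fst (Primrec.fst.comp Primrec.snd)
  have h : Primrec₂ fun (l : List ℕ) (q : ℕ × List ℕ) =>
      if q.2.length = q.1 then q.2 ++ (evalF evenL fstL stepL cv l q.1).toList else q.2 :=
    Primrec.ite
      (Primrec.eq.comp (Primrec.list_length.comp (Primrec.snd.comp Primrec.snd))
        (Primrec.fst.comp Primrec.snd))
      (Primrec.list_append.comp (Primrec.snd.comp Primrec.snd)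
        (option_toList_primrec.comp hEval))
      (Primrec.snd.comp Primrec.snd)
  exact (Primrec.nat_rec' Primrec.list_length (Primrec.const []) h).of_eq fun l => rfl

end AuxEval

/-- For every subshift `X ⊆ A^H`, `m(T[X]) ≥ m(T) ∨ m(X)`. -/
theorem statement6 {G H : Type*} [Group G] [Group H] {A : Type*} [Finite A] [Encodable A]
    {k r : ℕ} (σ : Fin k → G) (hσ : IsSymmGen σ) (τ : Fin r → H) (hτ : IsSymmGen τ)
    (F : Finset G) [Encodable ↥F] [Encodable (Fin r → ↥F)]
    (X : Set (H → A)) (hX : IsSubshift X) :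
    BaireLE
      (joinSet (mSet (pullback (cover σ) (boundedActionsShift τ F)))
        (mSet (pullback (cover τ) X)))
      (mSet (pullback (cover σ) (TXshift τ F X))) := by
  classical
  haveI : Fintype A := Fintype.ofFinite A
  -- choice of inverses among the generators of H
  have hcvex : ∀ p : Fin r × Bool, ∃ j : Fin r, τ j = (bif p.2 then τ p.1 else (τ p.1)⁻¹) := by
    rintro ⟨i, b⟩
    cases b
    · exact hτ.2 i
    · exact ⟨i, rfl⟩
  choose cv hcveq using hcvex
  -- words representing the elements of F
  have hsurj : Function.Surjective (cover σ) := by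
    rw [← MonoidHom.range_eq_top, cover, FreeGroup.range_lift_eq_closure]
    exact hσ.1
  have hrepex : ∀ b : ↥F, ∃ u : List (Fin k × Bool), cover σ (FreeGroup.mk u) = (b : G) := by
    intro b
    obtain ⟨f, hf⟩ := hsurj (b : G)
    exact ⟨f.toWord, by rwa [FreeGroup.mk_toWord]⟩
  choose rep hrepeq using hrepex
  -- lookup tables
  set evenL : List (ℕ × ℕ) :=
    ((Finset.univ : Finset (Option (A × (Fin r → ↥F)))).toList).map
      (fun o => (Encodable.encode o, Encodable.encode (o.map Prod.snd))) with hEvenL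
  set fstL : List (ℕ × ℕ) :=
    ((Finset.univ : Finset (A × (Fin r → ↥F))).toList).map
      (fun p => (Encodable.encode (some p), Encodable.encode (some p.1))) with hFstL
  set stepL : List ((ℕ × Fin r) × List (Fin k × Bool)) :=
    ((Finset.univ : Finset ((A × (Fin r → ↥F)) × Fin r)).toList).map
      (fun q => ((Encodable.encode (some q.1), q.2), rep (q.1.2 q.2))) with hStepL
  have hlkEven : ∀ o : Option (A × (Fin r → ↥F)),
      lk evenL (Encodable.encode o) = some (Encodable.encode (o.map Prod.snd)) := by
    intro o
    refine lk_eq (List.mem_map.2 ⟨o, Finset.mem_toList.2 (Finset.mem_univ o), rfl⟩) ?_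
    rintro p hp hkey
    obtain ⟨o', _, rfl⟩ := List.mem_map.1 hp
    have ho : o' = o := Encodable.encode_injective hkey
    rw [ho]
  have hlkFst : ∀ p : A × (Fin r → ↥F),
      lk fstL (Encodable.encode (some p)) = some (Encodable.encode (some p.1)) := by
    intro p
    refine lk_eq (List.mem_map.2 ⟨p, Finset.mem_toList.2 (Finset.mem_univ p), rfl⟩) ?_
    rintro q hq hkey
    obtain ⟨p', _, rfl⟩ := List.mem_map.1 hq
    have h1 : (some p' : Option (A × (Fin r → ↥F))) = some p :=
      Encodable.encode_injective hkey
    rw [Option.some_inj.1 h1]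
  have hlkStep : ∀ (p : A × (Fin r → ↥F)) (s : Fin r),
      lk stepL (Encodable.encode (some p), s) = some (rep (p.2 s)) := by
    intro p s
    refine lk_eq (List.mem_map.2 ⟨(p, s), Finset.mem_toList.2 (Finset.mem_univ _), rfl⟩) ?_
    rintro q hq hkey
    obtain ⟨q', _, rfl⟩ := List.mem_map.1 hq
    obtain ⟨h1, h2⟩ := Prod.ext_iff.1 hkey
    have h3 : (some q'.1 : Option (A × (Fin r → ↥F))) = some p :=
      Encodable.encode_injective h1
    have h4 : q'.1 = p := Option.some_inj.1 h3
    show rep (q'.1.2 q'.2) = rep (p.2 s)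
    rw [h4, h2]
  -- the reduction functional
  refine ⟨fun l => chainF (evalF evenL fstL stepL cv l) l.length, ?_, ?_, ?_⟩
  · exact (phiF_primrec evenL fstL stepL cv).to_comp
  · intro l₁ l₂ hpre
    exact ((chainF_mono (fun i v hv => evalF_mono hpre hv) l₁.length).1).trans
      (chainF_prefix_le hpre.length_le)
  · intro xx hxx
    obtain ⟨w0, hw0, rfl⟩ := hxx
    obtain ⟨z, hzmem, rfl⟩ := hw0
    obtain ⟨hzT, hzX⟩ := hzmem
    obtain ⟨c, hcX, hc⟩ := hzX 1
    refine ⟨fun m => if m % 2 = 0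
        then confFun ((fun g => (z g).2) ∘ (cover σ)) (m / 2)
        else confFun (c ∘ (cover τ)) (m / 2), ⟨?_, ?_⟩, ?_⟩
    · have he : (fun n => if 2 * n % 2 = 0
          then confFun ((fun g => (z g).2) ∘ (cover σ)) (2 * n / 2)
          else confFun (c ∘ (cover τ)) (2 * n / 2))
          = confFun ((fun g => (z g).2) ∘ (cover σ)) := by
        funext n
        have h1 : 2 * n % 2 = 0 := by omega
        have h2 : 2 * n / 2 = n := by omega
        rw [h1, h2]
        rfl
      show (fun n => if 2 * n % 2 = 0
          then confFun ((fun g => (z g).2) ∘ (cover σ)) (2 * n / 2)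
          else confFun (c ∘ (cover τ)) (2 * n / 2))
          ∈ mSet (pullback (cover σ) (boundedActionsShift τ F))
      rw [he]
      exact ⟨(fun g => (z g).2) ∘ (cover σ), ⟨fun g => (z g).2, hzT, rfl⟩, rfl⟩
    · have he : (fun n => if (2 * n + 1) % 2 = 0
          then confFun ((fun g => (z g).2) ∘ (cover σ)) ((2 * n + 1) / 2)
          else confFun (c ∘ (cover τ)) ((2 * n + 1) / 2))
          = confFun (c ∘ (cover τ)) := by
        funext n
        have h1 : ¬((2 * n + 1) % 2 = 0) := by omega
        have h2 : (2 * n + 1) / 2 = n := by omega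
        rw [if_neg h1, h2]
      show (fun n => if (2 * n + 1) % 2 = 0
          then confFun ((fun g => (z g).2) ∘ (cover σ)) ((2 * n + 1) / 2)
          else confFun (c ∘ (cover τ)) ((2 * n + 1) / 2))
          ∈ mSet (pullback (cover τ) X)
      rw [he]
      exact ⟨c ∘ (cover τ), ⟨c, hcX, rfl⟩, rfl⟩
    · intro n
      -- value of the input at the code of a word
      have hq : ∀ u : List (Fin k × Bool),
          confFun (z ∘ (cover σ)) (Encodable.encode u)
            = Encodable.encode (some ((z ∘ (cover σ)) (FreeGroup.mk u))) := by
        intro u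
        have hdec : (Encodable.decode (Encodable.encode u) : Option (FreeGroup (Fin k)))
            = some (FreeGroup.mk u) := by
          show ((Encodable.decode (Encodable.encode u) : Option (List (Fin k × Bool))).bind
            fun l => some (FreeGroup.mk l)) = some (FreeGroup.mk u)
          rw [Encodable.encodek]
          rfl
        show Encodable.encode
            (((Encodable.decode (Encodable.encode u) : Option (FreeGroup (Fin k)))).map
              (z ∘ (cover σ))) = _
        rw [hdec]
        rfl
      -- the ideal walk covers phiWord
      have hwalkId : ∀ (w : List (Fin r)) (u0 : List (Fin k × Bool)),
          cover σ (FreeGroup.mk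
            (w.foldl (fun u s => u ++ rep ((z (cover σ (FreeGroup.mk u))).2 s)) u0))
            = phiWord (fun g => (z g).2) (cover σ (FreeGroup.mk u0)) w := by
        intro w
        induction w with
        | nil => intro u0; rfl
        | cons s w ih =>
          intro u0
          rw [List.foldl_cons, ih]
          simp only [phiWord, List.foldl_cons]
          congr 1
          rw [← FreeGroup.mul_mk, map_mul, hrepeq]
      -- convergence of the simulated walk
      have hwalk : ∀ (w : List (Fin r)) (u0 : List (Fin k × Bool)), ∃ K : ℕ, ∀ K' ≥ K,
          w.foldl (stepF stepL (pref (confFun (z ∘ (cover σ))) K')) (some u0)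
            = some (w.foldl (fun u s => u ++ rep ((z (cover σ (FreeGroup.mk u))).2 s)) u0) := by
        intro w
        induction w with
        | nil => exact fun u0 => ⟨0, fun _ _ => rfl⟩
        | cons s w ih =>
          intro u0
          obtain ⟨K1, hK1⟩ := ih (u0 ++ rep ((z (cover σ (FreeGroup.mk u0))).2 s))
          refine ⟨max (Encodable.encode u0 + 1) K1, fun K' hK' => ?_⟩
          rw [List.foldl_cons, List.foldl_cons]
          have hg : (pref (confFun (z ∘ (cover σ))) K')[Encodable.encode u0]?
              = some (confFun (z ∘ (cover σ)) (Encodable.encode u0)) :=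
            pref_getElem? _ (by omega)
          have hstep : stepF stepL (pref (confFun (z ∘ (cover σ))) K') (some u0) s
              = some (u0 ++ rep ((z (cover σ (FreeGroup.mk u0))).2 s)) := by
            rw [stepF, Option.bind_some, hg, Option.bind_some, hq u0,
              hlkStep ((z ∘ (cover σ)) (FreeGroup.mk u0)) s]
            rfl
          rw [hstep]
          exact hK1 K' (le_trans (le_max_right _ _) hK')
      -- relating words over the generators of H to free group elements
      have hcov : ∀ u : List (Fin r × Bool),
          ((u.map cv).map τ).prod = cover τ (FreeGroup.mk u) := by
        intro u
        show ((u.map cv).map τ).prod = FreeGroup.lift τ (FreeGroup.mk u)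
        rw [FreeGroup.lift_mk, List.map_map]
        congr 1
        have hfn : (τ ∘ cv) = fun x : Fin r × Bool => bif x.2 then τ x.1 else (τ x.1)⁻¹ :=
          funext fun p => hcveq p
        rw [hfn]
      -- eventual correctness of each output coordinate
      have heval : ∀ m : ℕ, ∃ K : ℕ, ∀ K' ≥ K,
          evalF evenL fstL stepL cv (pref (confFun (z ∘ (cover σ))) K') m
            = some (if m % 2 = 0
                then confFun ((fun g => (z g).2) ∘ (cover σ)) (m / 2)
                else confFun (c ∘ (cover τ)) (m / 2)) := by
        intro m
        by_cases hpar : m % 2 = 0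
        · refine ⟨m / 2 + 1, fun K' hK' => ?_⟩
          rw [evalF, if_pos hpar, if_pos hpar,
            pref_getElem? _ (show m / 2 < K' by omega), Option.bind_some]
          have hx : confFun (z ∘ (cover σ)) (m / 2)
              = Encodable.encode
                (((Encodable.decode (m / 2) : Option (FreeGroup (Fin k)))).map
                  (z ∘ (cover σ))) := rfl
          rw [hx, hlkEven]
          congr 1
          show Encodable.encode
              ((((Encodable.decode (m / 2) : Option (FreeGroup (Fin k)))).map
                (z ∘ (cover σ))).map Prod.snd)
            = Encodable.encode
              (((Encodable.decode (m / 2) : Option (FreeGroup (Fin k)))).map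
                ((fun g => (z g).2) ∘ (cover σ)))
          rw [Option.map_map]
          rfl
        · rcases hdec : (Encodable.decode (α := List (Fin r × Bool)) (m / 2)) with _ | u
          · refine ⟨0, fun K' _ => ?_⟩
            rw [evalF, if_neg hpar, hdec, if_neg hpar]
            have hrhs : confFun (c ∘ (cover τ)) (m / 2) = 0 := by
              show Encodable.encode
                (((Encodable.decode (m / 2) : Option (FreeGroup (Fin r)))).map
                  (c ∘ (cover τ))) = 0
              have hd2 : (Encodable.decode (m / 2) : Option (FreeGroup (Fin r))) = none := by
                show ((Encodable.decode (m / 2) : Option (List (Fin r × Bool))).bind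
                  fun l => some (FreeGroup.mk l)) = none
                rw [hdec]
                rfl
              rw [hd2]
              simp
            rw [hrhs]
          · obtain ⟨K1, hK1⟩ := hwalk (u.map cv) []
            refine ⟨max K1 (Encodable.encode
              ((u.map cv).foldl
                (fun u' s => u' ++ rep ((z (cover σ (FreeGroup.mk u'))).2 s)) []) + 1),
              fun K' hK' => ?_⟩
            rw [evalF, if_neg hpar, hdec, if_neg hpar]
            show (((u.map cv).foldl (stepF stepL (pref (confFun (z ∘ (cover σ))) K'))
                (some [])).bind fun U' =>
                ((pref (confFun (z ∘ (cover σ))) K')[Encodable.encode U']?).bind (lk fstL))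
              = some (confFun (c ∘ (cover τ)) (m / 2))
            rw [hK1 K' (le_trans (le_max_left _ _) hK'), Option.bind_some,
              pref_getElem? _ (show Encodable.encode
                ((u.map cv).foldl
                  (fun u' s => u' ++ rep ((z (cover σ (FreeGroup.mk u'))).2 s)) []) < K'
                by omega),
              Option.bind_some, hq, hlkFst]
            have hd2 : (Encodable.decode (m / 2) : Option (FreeGroup (Fin r)))
                = some (FreeGroup.mk u) := by
              show ((Encodable.decode (m / 2) : Option (List (Fin r × Bool))).bind
                fun l => some (FreeGroup.mk l)) = some (FreeGroup.mk u)
              rw [hdec]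
              rfl
            have hrhs : confFun (c ∘ (cover τ)) (m / 2)
                = Encodable.encode (some (c (cover τ (FreeGroup.mk u)))) := by
              show Encodable.encode
                (((Encodable.decode (m / 2) : Option (FreeGroup (Fin r)))).map
                  (c ∘ (cover τ))) = _
              rw [hd2]
              rfl
            rw [hrhs]
            have h1 : cover σ (FreeGroup.mk
                ((u.map cv).foldl
                  (fun u' s => u' ++ rep ((z (cover σ (FreeGroup.mk u'))).2 s)) []))
                = phiWord (fun g => (z g).2) 1 (u.map cv) := by
              have h0 := hwalkId (u.map cv) []
              rw [← FreeGroup.one_eq_mk, map_one] at h0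
              exact h0
            have h2 := hc (u.map cv)
            rw [hcov u] at h2
            have hval : ((z ∘ (cover σ)) (FreeGroup.mk
                ((u.map cv).foldl
                  (fun u' s => u' ++ rep ((z (cover σ (FreeGroup.mk u'))).2 s)) []))).1
                = c (cover τ (FreeGroup.mk u)) := by
              show (z (cover σ (FreeGroup.mk _))).1 = _
              rw [h1, ← h2]
            rw [hval]
      -- uniform bound over the first n+1 coordinates
      have hall : ∀ N : ℕ, ∃ K : ℕ, ∀ m < N, ∀ K' ≥ K,
          evalF evenL fstL stepL cv (pref (confFun (z ∘ (cover σ))) K') m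
            = some (if m % 2 = 0
                then confFun ((fun g => (z g).2) ∘ (cover σ)) (m / 2)
                else confFun (c ∘ (cover τ)) (m / 2)) := by
        intro N
        induction N with
        | zero => exact ⟨0, fun m hm => absurd hm (Nat.not_lt_zero m)⟩
        | succ N ih =>
          obtain ⟨K1, h1⟩ := ih
          obtain ⟨K2, h2⟩ := heval N
          refine ⟨max K1 K2, fun m hm K' hK' => ?_⟩
          rcases Nat.lt_or_ge m N with h | h
          · exact h1 m h K' (le_trans (le_max_left _ _) hK')
          · have hmN : m = N := by omega
            subst hmN
            exact h2 K' (le_trans (le_max_right _ _) hK')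
      obtain ⟨K, hK⟩ := hall (n + 1)
      refine ⟨max K (n + 1), ?_⟩
      show (chainF
          (evalF evenL fstL stepL cv (pref (confFun (z ∘ (cover σ))) (max K (n + 1))))
          ((pref (confFun (z ∘ (cover σ))) (max K (n + 1))).length))[n]?
        = some (if n % 2 = 0
            then confFun ((fun g => (z g).2) ∘ (cover σ)) (n / 2)
            else confFun (c ∘ (cover τ)) (n / 2))
      have hlen : (pref (confFun (z ∘ (cover σ))) (max K (n + 1))).length = max K (n + 1) := by
        simp [pref]
      rw [hlen]
      have hfull : chainF
          (evalF evenL fstL stepL cv (pref (confFun (z ∘ (cover σ))) (max K (n + 1)))) (n + 1)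
          = (List.range (n + 1)).map (fun m => if m % 2 = 0
              then confFun ((fun g => (z g).2) ∘ (cover σ)) (m / 2)
              else confFun (c ∘ (cover τ)) (m / 2)) :=
        chainF_full (n + 1) (fun i hi => hK i hi _ (le_max_left _ _))
      refine prefix_getElem? (chainF_prefix_le (le_max_right K (n + 1))) ?_
      rw [hfull, List.getElem?_map, List.getElem?_range (Nat.lt_succ_self n)]
      rfl


end MedvedevFormal
end

section
/- Let G and H be finitely generated groups with decidable word problem. If there exists a computable quasi-isometry f : H → G, then there exists a computable coarse inverse g : G → H of f; in particular g is a quasi-isometry and sup over h ∈ H of d_H(g(f(h)), h) is finite. -/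
namespace MedvedevFormal

/-! Every `x ∈ G` lies within `N = ⌈C⌉` of `f(H)`, so `x = f(h) · v` for some `h ∈ H` and some
positive word `v` of length at most `N`. Given a word for `x`, such a pair (a word for `h`, `v`)
is found by unbounded search, each candidate being checked with the word problem of `G`; since
the first candidate in a fixed enumeration depends only on `x`, this defines a computable
`g : G → H` with `d(f(g x), x) ≤ N`. The quasi-isometry inequalities for `g` and the bound on
`d(g(f h), h)` then follow from those of `f` by the triangle inequality. -/

section WordMetric

variable {G : Type*} [Group G] {k : ℕ} {σ : Fin k → G}

theorem wordVal_append (σ : Fin k → G) (w₁ w₂ : List (Fin k × Bool)) :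
    wordVal σ (w₁ ++ w₂) = wordVal σ w₁ * wordVal σ w₂ := by
  rw [wordVal, wordVal, wordVal, ← map_mul, FreeGroup.mul_mk]

theorem wordVal_invRev (σ : Fin k → G) (w : List (Fin k × Bool)) :
    wordVal σ (FreeGroup.invRev w) = (wordVal σ w)⁻¹ := by
  rw [wordVal, wordVal, ← map_inv, FreeGroup.inv_mk]

theorem wordVal_map_true (σ : Fin k → G) (v : List (Fin k)) :
    wordVal σ (v.map (·, true)) = (v.map σ).prod := by
  simp [wordVal, cover, FreeGroup.lift_mk, Function.comp_def]

theorem wordVal_surjective (hσ : Subgroup.closure (Set.range σ) = ⊤) :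
    Function.Surjective (wordVal σ) := by
  intro g
  obtain ⟨x, rfl⟩ := FreeGroup.lift_surjective_iff_closure_range_eq_top.2 hσ g
  obtain ⟨w, rfl⟩ := Quot.exists_rep x
  exact ⟨w, rfl⟩

theorem IsSymmGen.exists_map_prod_eq (hσ : IsSymmGen σ) (g : G) :
    ∃ v : List (Fin k), (v.map σ).prod = g := by
  have hinv : (Set.range σ)⁻¹ ⊆ Set.range σ := by
    rintro x ⟨i, hi⟩
    rw [← inv_inv x, ← hi]
    exact hσ.2 i
  have hg : g ∈ Submonoid.closure (Set.range σ) := by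
    rw [← Set.union_eq_self_of_subset_right hinv, ← Subgroup.closure_toSubmonoid, hσ.1]
    trivial
  obtain ⟨l, hl, rfl⟩ := Submonoid.exists_list_of_mem_closure hg
  have hl' : l ∈ Set.range (List.map σ) := by rwa [Set.range_list_map]
  obtain ⟨v, rfl⟩ := hl'
  exact ⟨v, rfl⟩

theorem wordNorm_le_length (v : List (Fin k)) : wordNorm σ (v.map σ).prod ≤ v.length :=
  Nat.sInf_le ⟨v, rfl, rfl⟩

theorem IsSymmGen.exists_length_eq_wordNorm (hσ : IsSymmGen σ) (g : G) :
    ∃ v : List (Fin k), v.length = wordNorm σ g ∧ (v.map σ).prod = g := by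
  obtain ⟨v, hv⟩ := hσ.exists_map_prod_eq g
  exact Nat.sInf_mem (s := {n | ∃ w : List (Fin k), w.length = n ∧ (w.map σ).prod = g})
    ⟨v.length, v, rfl, hv⟩

theorem IsSymmGen.wordNorm_mul_le (hσ : IsSymmGen σ) (g g' : G) :
    wordNorm σ (g * g') ≤ wordNorm σ g + wordNorm σ g' := by
  obtain ⟨v, hvl, rfl⟩ := hσ.exists_length_eq_wordNorm g
  obtain ⟨v', hvl', rfl⟩ := hσ.exists_length_eq_wordNorm g'
  simpa [hvl, hvl'] using wordNorm_le_length (σ := σ) (v ++ v')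

theorem IsSymmGen.wordNorm_inv_le (hσ : IsSymmGen σ) (g : G) :
    wordNorm σ g⁻¹ ≤ wordNorm σ g := by
  obtain ⟨v, hvl, rfl⟩ := hσ.exists_length_eq_wordNorm g
  choose ι hι using hσ.2
  have hprod : ((v.map ι).reverse.map σ).prod = (v.map σ).prod⁻¹ := by
    simp [List.prod_inv_reverse, List.map_reverse, Function.comp_def, hι]
  have h := wordNorm_le_length (σ := σ) (v.map ι).reverse
  rw [hprod] at h
  simpa [hvl] using h

theorem IsSymmGen.wordDist_comm (hσ : IsSymmGen σ) (g g' : G) :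
    wordDist σ g g' = wordDist σ g' g := by
  have h := le_antisymm (hσ.wordNorm_inv_le (g⁻¹ * g'))
    (by simpa using hσ.wordNorm_inv_le (g⁻¹ * g')⁻¹)
  simp only [wordDist, ← h, mul_inv_rev, inv_inv]

theorem IsSymmGen.wordDist_triangle (hσ : IsSymmGen σ) (a b c : G) :
    wordDist σ a c ≤ wordDist σ a b + wordDist σ b c := by
  simpa [wordDist, mul_assoc] using
    (Nat.cast_le (α := ℝ)).2 (hσ.wordNorm_mul_le (a⁻¹ * b) (b⁻¹ * c))

theorem IsSymmGen.wordDist_le_wordDist_add (hσ : IsSymmGen σ) {a a' b b' : G} {N : ℝ}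
    (ha : wordDist σ a' a ≤ N) (hb : wordDist σ b b' ≤ N) :
    wordDist σ a b ≤ wordDist σ a' b' + 2 * N := by
  linarith [hσ.wordDist_triangle a a' b, hσ.wordDist_triangle a' b' b,
    hσ.wordDist_comm a a', hσ.wordDist_comm b' b]

end WordMetric

theorem le_mul_add_of_one_div_mul_sub_le {C a b : ℝ} (hC : 0 < C) (h : 1 / C * a - C ≤ b) :
    a ≤ C * (b + C) := by
  rwa [one_div, sub_le_iff_le_add, inv_mul_le_iff₀ hC] at h

section CoarseInverse

variable {G H : Type*} [Group G] [Group H] {k r : ℕ} {σ : Fin k → G} {τ : Fin r → H}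
  {f : H → G} {g : G → H} {N : ℝ}

theorem IsQIGroups.exists_nat_forall_exists_wordDist_le (hσ : IsSymmGen σ)
    (hf : IsQIGroups τ σ f) : ∃ N : ℕ, ∀ x, ∃ h, wordDist σ (f h) x ≤ N := by
  obtain ⟨C, -, -, hCs⟩ := hf
  refine ⟨⌈C⌉₊, fun x => ?_⟩
  obtain ⟨h, hh⟩ := hCs x
  exact ⟨h, (hσ.wordDist_comm _ _).trans_le (hh.trans (Nat.le_ceil C))⟩

theorem IsQIGroups.exists_wordDist_comp_le (hf : IsQIGroups τ σ f)
    (hfg : ∀ x, wordDist σ (f (g x)) x ≤ N) : ∃ C : ℝ, ∀ h, wordDist τ (g (f h)) h ≤ C := by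
  obtain ⟨C, hC, hCb, -⟩ := hf
  exact ⟨C * (N + C), fun h => le_mul_add_of_one_div_mul_sub_le (by linarith)
    ((hCb _ _).1.trans (hfg (f h)))⟩

theorem IsQIGroups.of_wordDist_comp_le (hσ : IsSymmGen σ) (hf : IsQIGroups τ σ f)
    (hfg : ∀ x, wordDist σ (f (g x)) x ≤ N) (hN : 0 ≤ N) : IsQIGroups σ τ g := by
  obtain ⟨C, hC, hCb, -⟩ := hf
  have hC0 : 0 < C := by linarith
  have hcomp (x x' : G) :
      wordDist σ (f (g x)) (f (g x')) ≤ wordDist σ x x' + 2 * N ∧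
        wordDist σ x x' ≤ wordDist σ (f (g x)) (f (g x')) + 2 * N :=
    ⟨hσ.wordDist_le_wordDist_add ((hσ.wordDist_comm _ _).trans_le (hfg x)) (hfg x'),
      hσ.wordDist_le_wordDist_add (hfg x) ((hσ.wordDist_comm _ _).trans_le (hfg x'))⟩
  set M := C + 2 * N
  have hCM : C ≤ M := by linarith
  have hMM : M ≤ M ^ 2 := by nlinarith
  have hCMM : C * M ≤ M ^ 2 := by nlinarith
  refine ⟨M ^ 2, by nlinarith, fun x x' => ⟨?_, ?_⟩, fun h => ⟨f h, ?_⟩⟩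
  · have hlow : wordDist σ x x' ≤ C * wordDist τ (g x) (g x') + M := by
      linarith [(hcomp x x').2, (hCb (g x) (g x')).2]
    have hd : 0 ≤ wordDist τ (g x) (g x') := Nat.cast_nonneg _
    rw [one_div, sub_le_iff_le_add, inv_mul_le_iff₀ (by positivity)]
    nlinarith
  · have hup := le_mul_add_of_one_div_mul_sub_le hC0 ((hCb (g x) (g x')).1.trans (hcomp x x').1)
    have hd : 0 ≤ wordDist σ x x' := Nat.cast_nonneg _
    nlinarith
  · have hclose := le_mul_add_of_one_div_mul_sub_le hC0
      ((hCb h (g (f h))).1.trans ((hσ.wordDist_comm _ _).trans_le (hfg (f h))))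
    nlinarith

end CoarseInverse

section Computability

theorem computable_invRev {α : Type*} [Primcodable α] : Computable (@FreeGroup.invRev α) :=
  (Primrec.list_reverse.comp (Primrec.list_map Primrec.id
    (Primrec.pair (Primrec.fst.comp Primrec.snd)
      (Primrec.not.comp (Primrec.snd.comp Primrec.snd))).to₂)).to_comp

theorem exists_computable_choice {α β : Type*} [Primcodable α] [Primcodable β]
    {p : α → β → Bool} (hp : Computable₂ p) (hex : ∀ a, ∃ b, p a b = true) :
    ∃ F : α → β, Computable F ∧ (∀ a, p a (F a) = true) ∧
      ∀ a a', p a = p a' → F a = F a' := by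
  set q : α → ℕ → Option β := fun a n =>
    (Encodable.decode n).bind fun b => bif p a b then some b else none
  have hq : Computable₂ q :=
    Computable.option_bind (Computable.decode.comp Computable.snd)
      (Computable.cond (hp.comp (Computable.fst.comp Computable.fst) Computable.snd)
        (Computable.option_some.comp Computable.snd) (Computable.const none))
  have hdom (a : α) : (Nat.rfindOpt (q a)).Dom := by
    obtain ⟨b, hb⟩ := hex a
    exact Nat.rfindOpt_dom.2 ⟨Encodable.encode b, b, by simp [q, hb]⟩
  have hspec (a : α) {b : β} (hb : b ∈ Nat.rfindOpt (q a)) : p a b = true := by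
    obtain ⟨n, hn⟩ := Nat.rfindOpt_spec hb
    simp only [q, Option.mem_def, Option.bind_eq_some_iff] at hn
    obtain ⟨b', -, hb'⟩ := hn
    cases h : p a b' <;> simp_all
  refine ⟨fun a => (Nat.rfindOpt (q a)).get (hdom a), ?_, fun a => hspec a (Part.get_mem _), ?_⟩
  · exact (Partrec.rfindOpt hq).of_eq_tot fun a => Part.get_mem _
  · intro a a' hpa
    have hqa : q a = q a' := by simp only [q, hpa]
    exact Part.get_eq_of_mem (hqa ▸ Part.get_mem _) _

end Computability

section CoarseSection

variable {G H : Type*} [Group G] [Group H] {k r : ℕ} {σ : Fin k → G} {τ : Fin r → H}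
  {f : H → G}

def nearPreimageTest (N : ℕ) (φG : List (Fin k × Bool) → Bool)
    (φf : List (Fin r × Bool) → List (Fin k × Bool)) (w : List (Fin k × Bool))
    (uv : List (Fin r × Bool) × List (Fin k)) : Bool :=
  decide (uv.2.length ≤ N) && φG (φf uv.1 ++ uv.2.map (·, true) ++ FreeGroup.invRev w)

theorem computable₂_nearPreimageTest (N : ℕ) {φG : List (Fin k × Bool) → Bool}
    {φf : List (Fin r × Bool) → List (Fin k × Bool)} (hφG : Computable φG)
    (hφf : Computable φf) : Computable₂ (nearPreimageTest N φG φf) := by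
  have hlen : Computable fun x : List (Fin k × Bool) × (List (Fin r × Bool) × List (Fin k)) =>
      decide (x.2.2.length ≤ N) :=
    (Primrec.nat_le.comp (Primrec.list_length.comp (Primrec.snd.comp Primrec.snd))
      (Primrec.const N)).decide.to_comp
  have hpos : Computable fun v : List (Fin k) => v.map (·, true) :=
    (Primrec.list_map Primrec.id (Primrec.pair Primrec.snd (Primrec.const true)).to₂).to_comp
  have hword : Computable fun x : List (Fin k × Bool) × (List (Fin r × Bool) × List (Fin k)) =>
      φG (φf x.2.1 ++ x.2.2.map (·, true) ++ FreeGroup.invRev x.1) :=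
    hφG.comp (Computable.list_append.comp
      (Computable.list_append.comp (hφf.comp (Computable.fst.comp Computable.snd))
        (hpos.comp (Computable.snd.comp Computable.snd)))
      (computable_invRev.comp Computable.fst))
  exact Primrec.and.to_comp.comp hlen hword

theorem nearPreimageTest_eq_true_iff {N : ℕ} {φG : List (Fin k × Bool) → Bool}
    {φf : List (Fin r × Bool) → List (Fin k × Bool)}
    (hφG : ∀ w, φG w = true ↔ wordVal σ w = 1) (hφf : ∀ u, wordVal σ (φf u) = f (wordVal τ u))
    (w : List (Fin k × Bool)) (uv : List (Fin r × Bool) × List (Fin k)) :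
    nearPreimageTest N φG φf w uv = true ↔
      uv.2.length ≤ N ∧ f (wordVal τ uv.1) * (uv.2.map σ).prod = wordVal σ w := by
  rw [nearPreimageTest, Bool.and_eq_true, decide_eq_true_iff, hφG, wordVal_append,
    wordVal_append, wordVal_invRev, hφf, wordVal_map_true, mul_inv_eq_one]

theorem exists_computableMap_wordDist_comp_le (hσ : IsSymmGen σ)
    (hτ : Subgroup.closure (Set.range τ) = ⊤) (hwp : DecidableWordProblem σ)
    (hfc : ComputableMap τ σ f) {N : ℕ} (hfN : ∀ x, ∃ h, wordDist σ (f h) x ≤ N) :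
    ∃ g : G → H, ComputableMap σ τ g ∧ ∀ x, wordDist σ (f (g x)) x ≤ N := by
  obtain ⟨φG, hφGc, hφG⟩ := hwp
  obtain ⟨φf, hφfc, hφf⟩ := hfc
  have htest := nearPreimageTest_eq_true_iff (N := N) hφG hφf
  have hex (w : List (Fin k × Bool)) : ∃ uv, nearPreimageTest N φG φf w uv = true := by
    obtain ⟨h, hh⟩ := hfN (wordVal σ w)
    obtain ⟨u, rfl⟩ := wordVal_surjective hτ h
    obtain ⟨v, hvl, hv⟩ := hσ.exists_length_eq_wordNorm ((f (wordVal τ u))⁻¹ * wordVal σ w)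
    refine ⟨(u, v), (htest w (u, v)).2 ⟨?_, by rw [hv, mul_inv_cancel_left]⟩⟩
    rw [wordDist] at hh
    rw [hvl]
    exact_mod_cast hh
  obtain ⟨F, hFc, hF, hFinv⟩ :=
    exists_computable_choice (computable₂_nearPreimageTest N hφGc hφfc) hex
  have hFwordVal (w w' : List (Fin k × Bool)) (hww : wordVal σ w = wordVal σ w') :
      F w = F w' :=
    hFinv w w' (funext fun uv => Bool.eq_iff_iff.2 (by rw [htest, htest, hww]))
  choose W hW using wordVal_surjective hσ.1
  refine ⟨fun x => wordVal τ (F (W x)).1,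
    ⟨fun w => (F w).1, Computable.fst.comp hFc, fun w => ?_⟩, fun x => ?_⟩
  · exact congrArg (fun uv => wordVal τ uv.1) (hFwordVal _ _ (hW _).symm)
  · obtain ⟨hlen, hprod⟩ := (htest (W x) _).1 (hF (W x))
    have hx : (f (wordVal τ (F (W x)).1))⁻¹ * x = ((F (W x)).2.map σ).prod := by
      rw [inv_mul_eq_iff_eq_mul, hprod, hW]
    rw [wordDist, hx]
    exact_mod_cast (wordNorm_le_length _).trans hlen

end CoarseSection

theorem statement10_general {G H : Type*} [Group G] [Group H] {k r : ℕ}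
    (σ : Fin k → G) (hσ : IsSymmGen σ) (τ : Fin r → H) (hτ : IsSymmGen τ)
    (hwpG : DecidableWordProblem σ)
    (f : H → G) (hfc : ComputableMap τ σ f) (hfqi : IsQIGroups τ σ f) :
    ∃ g : G → H, ComputableMap σ τ g ∧ IsQIGroups σ τ g ∧
      ∃ C : ℝ, ∀ h : H, wordDist τ (g (f h)) h ≤ C := by
  obtain ⟨N, hfN⟩ := hfqi.exists_nat_forall_exists_wordDist_le hσ
  obtain ⟨g, hgc, hfg⟩ := exists_computableMap_wordDist_comp_le hσ hτ.1 hwpG hfc hfN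
  exact ⟨g, hgc, hfqi.of_wordDist_comp_le hσ hfg (Nat.cast_nonneg _),
    hfqi.exists_wordDist_comp_le hfg⟩

/-- If `G` and `H` have decidable word problem and `f : H → G` is a computable
quasi-isometry, then `f` has a computable coarse inverse `g : G → H`; in particular `g`
is a quasi-isometry and `g ∘ f` is at uniformly bounded distance from the identity. -/
theorem statement10 {G H : Type*} [Group G] [Group H] {k r : ℕ}
    (σ : Fin k → G) (hσ : IsSymmGen σ) (τ : Fin r → H) (hτ : IsSymmGen τ)
    (hwpG : DecidableWordProblem σ) (hwpH : DecidableWordProblem τ)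
    (f : H → G) (hfc : ComputableMap τ σ f) (hfqi : IsQIGroups τ σ f) :
    ∃ g : G → H, ComputableMap σ τ g ∧ IsQIGroups σ τ g ∧
      ∃ C : ℝ, ∀ h : H, wordDist τ (g (f h)) h ≤ C :=
  statement10_general σ hσ τ hτ hwpG f hfc hfqi

end MedvedevFormal
end
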